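/- Let P be an H-group each of whose path components is open (equivalently, P is 0-semilocally simply connected), and let N be a normal sub-H-group of P. Then the quotient P/N, endowed with the quotient topology induced by the canonical map π : P → P/N, is a discrete topological group; in particular the canonical map π is continuous, open, and a group homomorphism onto P/N. -/

import Mathlib

open ContinuousMap

universe u v

/-- An H-group: a pointed space with continuous multiplication, homotopy inverse and the
constant map as homotopy identity, satisfying the H-group axioms up to pointed homotopy. -/
structure HGroup (P : Type u) [TopologicalSpace P] where
  pt : P
  mul : C(P × P, P)
  inv : C(P, P)
  mul_pt : mul (pt, pt) = pt
  inv_pt : inv pt = pt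
  left_id : HomotopicRel ⟨fun g => mul (pt, g), by fun_prop⟩ (ContinuousMap.id P) {pt}
  right_id : HomotopicRel ⟨fun g => mul (g, pt), by fun_prop⟩ (ContinuousMap.id P) {pt}
  left_inv : HomotopicRel ⟨fun g => mul (inv g, g), by fun_prop⟩ (const P pt) {pt}
  right_inv : HomotopicRel ⟨fun g => mul (g, inv g), by fun_prop⟩ (const P pt) {pt}
  assoc : HomotopicRel ⟨fun p : P × P × P => mul (mul (p.1, p.2.1), p.2.2), by fun_prop⟩
      ⟨fun p : P × P × P => mul (p.1, mul (p.2.1, p.2.2)), by fun_prop⟩ {(pt, pt, pt)}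

/-- `Jtn S g` : `g` homotopically belongs to `S`, i.e. there is a path in the ambient
space from `g` to a point of `S`. -/
def Jtn {P : Type u} [TopologicalSpace P] (S : Set P) (g : P) : Prop := ∃ s ∈ S, Joined g s

/-- The class of `g` in `π₀`. -/
def pc {P : Type u} [TopologicalSpace P] (g : P) : ZerothHomotopy P :=
  Quotient.mk (pathSetoid P) g

namespace HGroup
variable {P : Type u} [TopologicalSpace P]

/-- The left coset `g·S = {g' | η(g)·g' ∈̃ S}`. -/
def lcoset (H : HGroup P) (g : P) (S : Set P) : Set P :=
  {g' | Jtn S (H.mul (H.inv g, g'))}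

/-- The right coset `S·g = {g' | g'·η(g) ∈̃ S}`. -/
def rcoset (H : HGroup P) (S : Set P) (g : P) : Set P :=
  {g' | Jtn S (H.mul (g', H.inv g))}

/-- The pointwise product of two subsets. -/
def mulSet (H : HGroup P) (A B : Set P) : Set P := {p | ∃ a ∈ A, ∃ b ∈ B, p = H.mul (a, b)}

end HGroup

/-- A subset is saturated if it is a union of path components of the ambient space. -/
def Saturated {P : Type u} [TopologicalSpace P] (A : Set P) : Prop :=
  ∀ x ∈ A, ∀ y, Joined x y → y ∈ A

/-- A sub-H-group: a pointed subspace which is itself an H-group such that the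
inclusion is an H-homomorphism (via pointed homotopies). -/
structure SubHGroup {P : Type u} [TopologicalSpace P] (H : HGroup P) where
  carrier : Set P
  struct : HGroup carrier
  pt_val : (struct.pt : P) = H.pt
  incl_mul : HomotopicRel
    ⟨fun p : carrier × carrier => (struct.mul p : P), by fun_prop⟩
    ⟨fun p : carrier × carrier => H.mul (p.1, p.2), by fun_prop⟩
    {(struct.pt, struct.pt)}
  incl_inv : HomotopicRel
    ⟨fun x : carrier => (struct.inv x : P), by fun_prop⟩
    ⟨fun x : carrier => H.inv x, by fun_prop⟩
    {struct.pt}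

/-- A sub-H-group is normal if `g·n·g⁻¹` homotopically belongs to it for all `g`, `n`. -/
def SubHGroup.Normal {P : Type u} [TopologicalSpace P] {H : HGroup P}
    (N : SubHGroup H) : Prop :=
  ∀ g : P, ∀ n ∈ N.carrier, Jtn N.carrier (H.mul (H.mul (g, n), H.inv g))

/-- The set of left cosets of `S` in `P`. -/
def Cosets {P : Type u} [TopologicalSpace P] (H : HGroup P) (S : Set P) :=
  {T : Set P // ∃ g : P, T = H.lcoset g S}

/-- The left coset of `S` represented by `g`, as an element of `Cosets H S`. -/
def cst {P : Type u} [TopologicalSpace P] (H : HGroup P) (S : Set P) (g : P) : Cosets H S :=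
  ⟨H.lcoset g S, g, rfl⟩

/-- The coset equivalence relation: `g₁ ∼ g₂` iff `g₁·η(g₂) ∈̃ S`. -/
def cosetRel {P : Type u} [TopologicalSpace P] (H : HGroup P) (S : Set P)
    (g₁ g₂ : P) : Prop :=
  Jtn S (H.mul (g₁, H.inv g₂))

/-!
Path components of an H-group form a group `π₀ P`, in which the image of a normal sub-H-group
`N` is a normal subgroup `K`, and `g₁ ∼ g₂` means exactly `[g₁] [g₂]⁻¹ ∈ K`. Hence
`P/N ≃ π₀ P ⧸ K`, from which `P/N` inherits its group structure. Points joined by a path are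
equivalent, so every subset of `P/N` pulls back to a union of path components, which is open:
`P/N` is discrete, and all topological claims follow.
-/

namespace ContinuousMap

variable {X : Type u} {Y : Type v} [TopologicalSpace X] [TopologicalSpace Y] {f g : C(X, Y)}

theorem Homotopic.joined (h : f.Homotopic g) (x : X) : Joined (f x) (g x) :=
  let ⟨F⟩ := h
  ⟨F.evalAt x⟩

theorem HomotopicRel.joined {S : Set X} (h : HomotopicRel f g S) (x : X) :
    Joined (f x) (g x) :=
  h.homotopic.joined x

end ContinuousMap

noncomputable def Quot.equivOfSurjective {α β : Type*} {r : α → α → Prop} (f : α → β)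
    (hf : Function.Surjective f) (hr : ∀ a b, r a b ↔ f a = f b) : Quot r ≃ β :=
  Equiv.ofBijective (Quot.lift f fun a b h => (hr a b).1 h)
    ⟨fun x y => Quot.induction_on₂ x y fun a b h => Quot.sound ((hr a b).2 h),
      (Quot.surjective_lift _).2 hf⟩

theorem discreteTopology_quot_of_joined {X : Type u} [TopologicalSpace X]
    (hopen : ∀ x : X, IsOpen (pathComponent x)) {r : X → X → Prop}
    (hr : ∀ x y, Joined x y → r x y) : DiscreteTopology (Quot r) := by
  refine discreteTopology_iff_forall_isOpen.2 fun U => ?_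
  rw [← isQuotientMap_quot_mk.isOpen_preimage, isOpen_iff_forall_mem_open]
  refine fun x hx => ⟨pathComponent x, fun y hy => ?_, hopen x, mem_pathComponent_self x⟩
  rwa [Set.mem_preimage, ← Quot.sound (hr x y hy)]

theorem pc_eq_pc_iff {X : Type u} [TopologicalSpace X] {x y : X} : pc x = pc y ↔ Joined x y :=
  Quotient.eq

theorem jtn_iff_pc_mem_image {X : Type u} [TopologicalSpace X] {S : Set X} {x : X} :
    Jtn S x ↔ pc x ∈ pc '' S := by
  simp only [Jtn, Set.mem_image, pc_eq_pc_iff]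
  exact exists_congr fun _ => and_congr_right fun _ => ⟨Joined.symm, Joined.symm⟩

namespace HGroup

variable {P : Type u} [TopologicalSpace P] (H : HGroup P)

/-- `ZerothHomotopy P`, renamed so that it can carry the group structure induced by `H`. -/
def Pi0 (_ : HGroup P) : Type u := ZerothHomotopy P

def toPi0 (g : P) : H.Pi0 := pc g

theorem toPi0_surjective : Function.Surjective H.toPi0 :=
  ZerothHomotopy.mk_surjective

variable {H} in
theorem toPi0_eq_toPi0_iff {g g' : P} : H.toPi0 g = H.toPi0 g' ↔ Joined g g' :=
  pc_eq_pc_iff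

instance : Group H.Pi0 where
  mul := Quotient.map₂ (fun a b => H.mul (a, b)) fun _ _ ha _ _ hb =>
    (ha.prod hb).map H.mul.continuous
  one := H.toPi0 H.pt
  inv := Quotient.map H.inv fun _ _ ha => ha.map H.inv.continuous
  mul_assoc := by
    rintro ⟨a⟩ ⟨b⟩ ⟨c⟩
    exact Quotient.sound (H.assoc.joined (a, b, c))
  one_mul := by
    rintro ⟨a⟩
    exact Quotient.sound (H.left_id.joined a)
  mul_one := by
    rintro ⟨a⟩
    exact Quotient.sound (H.right_id.joined a)
  inv_mul_cancel := by
    rintro ⟨a⟩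
    exact Quotient.sound (H.left_inv.joined a)

@[simp]
theorem toPi0_mul (g g' : P) : H.toPi0 (H.mul (g, g')) = H.toPi0 g * H.toPi0 g' := rfl

@[simp]
theorem toPi0_inv (g : P) : H.toPi0 (H.inv g) = (H.toPi0 g)⁻¹ := rfl

@[simp]
theorem toPi0_pt : H.toPi0 H.pt = 1 := rfl

end HGroup

namespace SubHGroup

variable {P : Type u} [TopologicalSpace P] {H : HGroup P} (N : SubHGroup H)

def pi0Subgroup : Subgroup H.Pi0 where
  carrier := H.toPi0 '' N.carrier
  one_mem' := ⟨N.struct.pt, N.struct.pt.2, by rw [N.pt_val, H.toPi0_pt]⟩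
  mul_mem' := by
    rintro _ _ ⟨a, ha, rfl⟩ ⟨b, hb, rfl⟩
    exact ⟨_, (N.struct.mul (⟨a, ha⟩, ⟨b, hb⟩)).2,
      HGroup.toPi0_eq_toPi0_iff.2 (N.incl_mul.joined (⟨a, ha⟩, ⟨b, hb⟩))⟩
  inv_mem' := by
    rintro _ ⟨a, ha, rfl⟩
    exact ⟨_, (N.struct.inv ⟨a, ha⟩).2,
      HGroup.toPi0_eq_toPi0_iff.2 (N.incl_inv.joined ⟨a, ha⟩)⟩

variable {N}

theorem Normal.pi0Subgroup_normal (hN : N.Normal) : N.pi0Subgroup.Normal := by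
  refine ⟨?_⟩
  rintro _ ⟨n, hn, rfl⟩ x
  obtain ⟨g, rfl⟩ := H.toPi0_surjective x
  obtain ⟨s, hs, hj⟩ := hN g n hn
  exact ⟨s, hs, (HGroup.toPi0_eq_toPi0_iff.2 hj).symm⟩

variable (N)

theorem cosetRel_iff {a b : P} :
    cosetRel H N.carrier a b ↔ H.toPi0 a / H.toPi0 b ∈ N.pi0Subgroup := by
  rw [cosetRel, jtn_iff_pc_mem_image, div_eq_mul_inv]
  rfl

theorem cosetRel_of_joined {a b : P} (h : Joined a b) : cosetRel H N.carrier a b := by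
  rw [cosetRel_iff, HGroup.toPi0_eq_toPi0_iff.2 h, div_self']
  exact N.pi0Subgroup.one_mem

variable {N}

noncomputable def Normal.quotEquiv (hN : N.Normal) :
    Quot (cosetRel H N.carrier) ≃ H.Pi0 ⧸ N.pi0Subgroup :=
  haveI := hN.pi0Subgroup_normal
  Quot.equivOfSurjective (fun g => (H.toPi0 g : H.Pi0 ⧸ N.pi0Subgroup))
    ((QuotientGroup.mk_surjective).comp H.toPi0_surjective)
    fun _ _ => (N.cosetRel_iff).trans QuotientGroup.eq_iff_div_mem.symm

@[simp]
theorem Normal.quotEquiv_mk (hN : N.Normal) (g : P) :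
    hN.quotEquiv (Quot.mk _ g) = (H.toPi0 g : H.Pi0 ⧸ N.pi0Subgroup) := rfl

end SubHGroup

/-- For a 0-semilocally simply connected H-group `P` (all path components open) and a
normal sub-H-group `N`, the quotient `P/N` with the quotient topology is a discrete
topological group, and the canonical map is a continuous open surjective homomorphism. -/
theorem stmt_19 {P : Type u} [TopologicalSpace P] (H : HGroup P)
    (hopen : ∀ x : P, IsOpen (pathComponent x)) (N : SubHGroup H) (hN : N.Normal) :
    Continuous (Quot.mk (cosetRel H N.carrier)) ∧
    IsOpenMap (Quot.mk (cosetRel H N.carrier)) ∧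
    Function.Surjective (Quot.mk (cosetRel H N.carrier)) ∧
    DiscreteTopology (Quot (cosetRel H N.carrier)) ∧
    ∃ m : Quot (cosetRel H N.carrier) → Quot (cosetRel H N.carrier) →
        Quot (cosetRel H N.carrier),
    ∃ i : Quot (cosetRel H N.carrier) → Quot (cosetRel H N.carrier),
      (∀ g h : P, m (Quot.mk _ g) (Quot.mk _ h) = Quot.mk _ (H.mul (g, h))) ∧
      (∀ g : P, i (Quot.mk _ g) = Quot.mk _ (H.inv g)) ∧
      (∀ a b c, m (m a b) c = m a (m b c)) ∧
      (∀ a, m (Quot.mk _ H.pt) a = a) ∧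
      (∀ a, m a (Quot.mk _ H.pt) = a) ∧
      (∀ a, m (i a) a = Quot.mk _ H.pt) ∧
      (∀ a, m a (i a) = Quot.mk _ H.pt) ∧
      Continuous (fun p : Quot (cosetRel H N.carrier) × Quot (cosetRel H N.carrier) =>
        m p.1 p.2) ∧
      Continuous i := by
  have := hN.pi0Subgroup_normal
  have : DiscreteTopology (Quot (cosetRel H N.carrier)) :=
    discreteTopology_quot_of_joined hopen fun _ _ => N.cosetRel_of_joined
  let e := hN.quotEquiv
  let := e.group
  have hmk_mul (g g' : P) :
      Quot.mk _ (H.mul (g, g')) = Quot.mk (cosetRel H N.carrier) g * Quot.mk _ g' :=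
    e.injective (by simp [e, Equiv.mul_def])
  have hmk_inv (g : P) : Quot.mk _ (H.inv g) = (Quot.mk (cosetRel H N.carrier) g)⁻¹ :=
    e.injective (by simp [e, Equiv.inv_def])
  have hmk_pt : Quot.mk (cosetRel H N.carrier) H.pt = 1 :=
    e.injective (by simp [e, Equiv.one_def])
  refine ⟨continuous_quot_mk, fun _ _ => isOpen_discrete _, Quot.mk_surjective, inferInstance,
    (· * ·), (·⁻¹), fun g g' => (hmk_mul g g').symm, fun g => (hmk_inv g).symm, mul_assoc,
    fun a => hmk_pt ▸ one_mul a, fun a => hmk_pt ▸ mul_one a,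
    fun a => hmk_pt ▸ inv_mul_cancel a, fun a => hmk_pt ▸ mul_inv_cancel a,
    continuous_of_discreteTopology, continuous_of_discreteTopology⟩
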